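/- arXiv:1612.05986 — 5 statements merged into one kernel-verified Lean document; each statement's English description precedes it below -/
import Mathlib

section
/- For p ∈ (0,1) with p ≠ 1/2, let δ be a Bernoulli(p) random variable. Then for all real t, E[exp(t(δ−p))] = p·e^{t(1−p)} + (1−p)·e^{−tp} ≤ exp(K(p)²·t²), where K(p) = (1/2)·√((1−2p)/log((1−p)/p)). -/
open MeasureTheory ProbabilityTheory Matrix

noncomputable section

/-- Spectral (operator) norm of a real square matrix. -/
def opNorm {n : ℕ} (A : Matrix (Fin n) (Fin n) ℝ) : ℝ :=
  ‖Matrix.toEuclideanCLM (𝕜 := ℝ) A‖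

/-- The Kearns–Saul sub-Gaussian parameter. -/
def ksK (p : ℝ) : ℝ := (1/2) * Real.sqrt ((1 - 2*p) / Real.log ((1-p)/p))

/-- Eigenvalues of a Hermitian matrix sorted in increasing order. -/
def sortedEigs {m : Type*} [Fintype m] [DecidableEq m] {A : Matrix m m ℝ}
    (hA : A.IsHermitian) : List ℝ :=
  (Finset.univ.val.map hA.eigenvalues).sort (· ≤ ·)

/-- Second smallest eigenvalue of a Hermitian matrix. -/
def lambda2 {m : Type*} [Fintype m] [DecidableEq m] {A : Matrix m m ℝ}
    (hA : A.IsHermitian) : ℝ := (sortedEigs hA).getD 1 0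

/-- Canonical basis vector. -/
def ev {n : ℕ} (i : Fin n) : Fin n → ℝ := Pi.single i 1

/-- Laplacian of the weighted graph with vertex indicators `c`. -/
def lapOf {n : ℕ} (w : Fin n → Fin n → ℝ) (c : Fin n → ℝ) : Matrix (Fin n) (Fin n) ℝ :=
  ∑ i : Fin n, ∑ j : Fin n,
    if i < j then (c i * c j * w i j) • Matrix.vecMulVec (ev i - ev j) (ev i - ev j) else 0

/-- Augmented Laplacian. -/
def augLap {n : ℕ} (w : Fin n → Fin n → ℝ) (α : ℝ) (c : Fin n → ℝ) :
    Matrix (Fin n) (Fin n) ℝ :=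
  lapOf w c + α • Matrix.diagonal (fun i => 1 - c i)

/-!
Write `L = log ((1 - p) / p)`, `c = (1 - 2p) / (4L)` and `ψ(t) = log (p eᵗ + 1 - p) - p t` for the
log-MGF of `δ - p`; then `ψ' (t) = σ(t - L) - p` with `σ` the logistic sigmoid, and the claim for
`p < 1/2` is `g = c t² - ψ ≥ 0`. The gap `g` vanishes at `0` and is symmetric about `L`, and its
derivative `2ct - σ(t - L) + p` is concave on `(-∞, L]` (the sigmoid is convex left of `0`) with
zeros at `0` and `L`, so `g` decreases and then increases on `(-∞, L]`. The case `p > 1/2` follows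
by exchanging the two atoms (`p ↦ 1 - p`, `t ↦ -t`), which leaves `ksK` unchanged.
-/

open Real Set

theorem le_of_concaveOn_deriv_Iic {g : ℝ → ℝ} {a b t : ℝ} (hg : Differentiable ℝ g)
    (hconc : ConcaveOn ℝ (Iic b) (deriv g)) (hab : a < b) (ha : deriv g a = 0)
    (hb : deriv g b = 0) (ht : t ≤ b) : g a ≤ g t := by
  have haI : a ∈ Iic b := hab.le
  have hbI : b ∈ Iic b := self_mem_Iic
  rcases le_total t a with hta | hat
  · refine antitoneOn_of_deriv_nonpos (convex_Iic a) hg.continuous.continuousOn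
      hg.differentiableOn (fun x hx => ?_) hta self_mem_Iic hta
    rw [interior_Iic] at hx
    have := hconc.left_le_of_le_right'' (mem_Iic.2 (hx.le.trans hab.le)) hbI hx.le hab
      (by rw [ha, hb])
    rwa [ha] at this
  · refine monotoneOn_of_deriv_nonneg (convex_Icc a b) hg.continuous.continuousOn
      hg.differentiableOn (fun x hx => ?_) ⟨le_rfl, hab.le⟩ ⟨hat, ht⟩ hat
    rw [interior_Icc] at hx
    have := hconc.ge_on_segment haI hbI
      (by rw [segment_eq_Icc hab.le]; exact Ioo_subset_Icc_self hx)
    rwa [ha, hb, min_self] at this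

theorem convexOn_sigmoid_Iic : ConvexOn ℝ (Iic 0) sigmoid := by
  refine MonotoneOn.convexOn_of_deriv (convex_Iic 0) continuous_sigmoid.continuousOn
    differentiable_sigmoid.differentiableOn ?_
  rw [deriv_sigmoid, interior_Iic]
  intro x _ y hy hxy
  have hy_half : sigmoid y ≤ 1 / 2 := by
    simpa [sigmoid_zero] using sigmoid_le hy.le
  nlinarith [sigmoid_le hxy]

theorem integral_comp_of_forall_eq_zero_or_one {Ω : Type*} [MeasurableSpace Ω] {μ : Measure Ω}
    [IsProbabilityMeasure μ] {δ : Ω → ℝ} (hδ : Measurable δ) (h01 : ∀ ω, δ ω = 0 ∨ δ ω = 1)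
    (f : ℝ → ℝ) :
    ∫ ω, f (δ ω) ∂μ = μ.real {ω | δ ω = 1} * f 1 + (1 - μ.real {ω | δ ω = 1}) * f 0 := by
  set A := {ω | δ ω = 1}
  have hA : MeasurableSet A := hδ (measurableSet_singleton 1)
  have hsplit : (fun ω => f (δ ω)) = fun ω => A.indicator (fun _ => f 1 - f 0) ω + f 0 := by
    funext ω
    rcases h01 ω with h | h <;> simp [A, h]
  rw [hsplit, integral_add ((integrable_const _).indicator hA) (integrable_const _),
    integral_indicator_const _ hA, integral_const, probReal_univ, smul_eq_mul, smul_eq_mul]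
  ring

namespace KearnsSaul

def centeredBernoulliCgf (p t : ℝ) : ℝ := log (p * exp t + (1 - p)) - p * t

variable {p : ℝ}

theorem mul_exp_add_one_sub_pos (hp0 : 0 < p) (hp1 : p < 1) (t : ℝ) :
    0 < p * exp t + (1 - p) := by
  have := exp_pos t
  nlinarith

theorem exp_centeredBernoulliCgf (hp0 : 0 < p) (hp1 : p < 1) (t : ℝ) :
    exp (centeredBernoulliCgf p t) = p * exp (t * (1 - p)) + (1 - p) * exp (-(t * p)) := by
  rw [centeredBernoulliCgf, exp_sub, exp_log (mul_exp_add_one_sub_pos hp0 hp1 t),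
    show t * (1 - p) = t - t * p by ring, exp_sub, exp_neg, mul_comm p t]
  field_simp

theorem sigmoid_sub_log (hp0 : 0 < p) (hp1 : p < 1) (t : ℝ) :
    sigmoid (t - log ((1 - p) / p)) = p * exp t / (p * exp t + (1 - p)) := by
  have hq : 0 < 1 - p := by linarith
  rw [sigmoid_def, neg_sub, exp_sub, exp_log (by positivity)]
  field_simp

theorem hasDerivAt_centeredBernoulliCgf (hp0 : 0 < p) (hp1 : p < 1) (t : ℝ) :
    HasDerivAt (centeredBernoulliCgf p) (sigmoid (t - log ((1 - p) / p)) - p) t := by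
  rw [sigmoid_sub_log hp0 hp1]
  have hexp := ((hasDerivAt_exp t).const_mul p).add_const (1 - p)
  exact ((hexp.log (mul_exp_add_one_sub_pos hp0 hp1 t).ne').sub
    ((hasDerivAt_id t).const_mul p)).congr_deriv (by ring)

theorem centeredBernoulliCgf_reflect (hp0 : 0 < p) (hp1 : p < 1) (t : ℝ) :
    centeredBernoulliCgf p (2 * log ((1 - p) / p) - t)
      = centeredBernoulliCgf p t + (1 - 2 * p) * (log ((1 - p) / p) - t) := by
  set L := log ((1 - p) / p)
  have hq : 0 < 1 - p := by linarith
  have hexpL : exp L = (1 - p) / p := exp_log (by positivity)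
  have hfactor : p * exp (2 * L - t) + (1 - p) = exp (L - t) * (p * exp t + (1 - p)) := by
    rw [show 2 * L - t = L + L - t by ring, exp_sub, exp_add, exp_sub, hexpL]
    field_simp
    ring
  rw [centeredBernoulliCgf, centeredBernoulliCgf, hfactor,
    log_mul (exp_pos _).ne' (mul_exp_add_one_sub_pos hp0 hp1 t).ne', log_exp]
  ring

theorem centeredBernoulliCgf_le (hp0 : 0 < p) (hp : p < 1 / 2) (t : ℝ) :
    centeredBernoulliCgf p t ≤ (1 - 2 * p) / (4 * log ((1 - p) / p)) * t ^ 2 := by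
  set L := log ((1 - p) / p)
  have hp1 : p < 1 := by linarith
  have hL : 0 < L := log_pos (by rw [lt_div_iff₀ hp0]; linarith)
  set c := (1 - 2 * p) / (4 * L)
  have hcL : 4 * c * L = 1 - 2 * p := by simp only [c]; field_simp
  set g := fun s => c * s ^ 2 - centeredBernoulliCgf p s
  have hg_deriv (s : ℝ) : HasDerivAt g (2 * c * s - (sigmoid (s - L) - p)) s := by
    have h := ((hasDerivAt_pow 2 s).const_mul c).sub (hasDerivAt_centeredBernoulliCgf hp0 hp1 s)
    exact h.congr_deriv (by push_cast; ring)
  have hg_deriv_eq : deriv g = fun s => 2 * c * s + p - sigmoid (s - L) :=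
    funext fun s => (hg_deriv s).deriv.trans (by ring)
  have hσ : ConvexOn ℝ (Iic L) fun s => sigmoid (s - L) := by
    have hIic : (fun s => -L + s) ⁻¹' Iic 0 = Iic L := by ext s; simp
    simpa [hIic, Function.comp_def, neg_add_eq_sub] using
      convexOn_sigmoid_Iic.translate_right (-L)
  have hconc : ConcaveOn ℝ (Iic L) (deriv g) := by
    rw [hg_deriv_eq]
    exact ((LinearMap.mul ℝ ℝ (2 * c)).concaveOn (convex_Iic L)).add_const p |>.sub hσ
  have hderiv0 : deriv g 0 = 0 := by
    have hσ0 : sigmoid (0 - L) = p := by simpa using sigmoid_sub_log hp0 hp1 0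
    simp only [hg_deriv_eq, hσ0]
    ring
  have hderivL : deriv g L = 0 := by
    simp only [hg_deriv_eq, sub_self, sigmoid_zero]
    linarith
  have hg_nonneg {s : ℝ} (hs : s ≤ L) : 0 ≤ g s := by
    simpa [g, centeredBernoulliCgf] using
      le_of_concaveOn_deriv_Iic (fun s => (hg_deriv s).differentiableAt) hconc hL hderiv0 hderivL hs
  have hg_reflect (s : ℝ) : g (2 * L - s) = g s := by
    simp only [g]
    rw [centeredBernoulliCgf_reflect hp0 hp1]
    linear_combination (L - s) * hcL
  have : 0 ≤ g t := by
    rcases le_total t L with h | h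
    · exact hg_nonneg h
    · rw [← hg_reflect]
      exact hg_nonneg (by linarith)
  simp only [g] at this
  linarith

theorem ksK_one_sub (p : ℝ) : ksK (1 - p) = ksK p := by
  rw [ksK, ksK, sub_sub_cancel, ← inv_div (1 - p) p, log_inv,
    show 1 - 2 * (1 - p) = -(1 - 2 * p) by ring, neg_div_neg_eq]

theorem ksK_mul_sq (hp0 : 0 < p) (hp : p < 1 / 2) (t : ℝ) :
    (ksK p * t) ^ 2 = (1 - 2 * p) / (4 * log ((1 - p) / p)) * t ^ 2 := by
  have hL : 0 < log ((1 - p) / p) := log_pos (by rw [lt_div_iff₀ hp0]; linarith)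
  rw [ksK, mul_pow, mul_pow, sq_sqrt (div_nonneg (by linarith) hL.le)]
  field_simp
  ring

theorem mgf_le_of_lt_half (hp0 : 0 < p) (hp : p < 1 / 2) (t : ℝ) :
    p * exp (t * (1 - p)) + (1 - p) * exp (-(t * p)) ≤ exp ((ksK p * t) ^ 2) := by
  rw [← exp_centeredBernoulliCgf hp0 (by linarith), ksK_mul_sq hp0 hp]
  exact exp_le_exp.2 (centeredBernoulliCgf_le hp0 hp t)

theorem mgf_le (hp : p ∈ Ioo 0 1) (hp2 : p ≠ 1 / 2) (t : ℝ) :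
    p * exp (t * (1 - p)) + (1 - p) * exp (-(t * p)) ≤ exp ((ksK p * t) ^ 2) := by
  rcases hp2.lt_or_gt with h | h
  · exact mgf_le_of_lt_half hp.1 h t
  · have h' := mgf_le_of_lt_half (sub_pos.2 hp.2) (by linarith) (-t)
    rw [ksK_one_sub, sub_sub_cancel, neg_mul, neg_mul, neg_neg, mul_neg, neg_sq] at h'
    linarith

end KearnsSaul

/-- Kearns–Saul inequality. -/
theorem stmt0 {Ω : Type*} [MeasurableSpace Ω] (μ : Measure Ω) [IsProbabilityMeasure μ]
    (δ : Ω → ℝ) (hmeas : Measurable δ) (h01 : ∀ ω, δ ω = 0 ∨ δ ω = 1)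
    (p : ℝ) (hp : p ∈ Set.Ioo (0:ℝ) 1) (hp2 : p ≠ 1/2)
    (hlaw : μ {ω | δ ω = 1} = ENNReal.ofReal p) (t : ℝ) :
    (∫ ω, Real.exp (t * (δ ω - p)) ∂μ)
        = p * Real.exp (t * (1 - p)) + (1 - p) * Real.exp (-(t * p))
      ∧ p * Real.exp (t * (1 - p)) + (1 - p) * Real.exp (-(t * p))
        ≤ Real.exp ((ksK p * t) ^ 2) := by
  have hprob : μ.real {ω | δ ω = 1} = p := by
    rw [measureReal_def, hlaw, ENNReal.toReal_ofReal hp.1.le]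
  refine ⟨?_, KearnsSaul.mgf_le hp hp2 t⟩
  rw [integral_comp_of_forall_eq_zero_or_one hmeas h01 fun x => exp (t * (x - p)), hprob]
  ring_nf
end
end

section
/- Let L̄_δ = L_δ + Σᵢ α(1−δᵢ) eᵢeᵢᵀ be the augmented Laplacian of a site-percolated weighted graph, where L_δ = Σ_{i<j} δᵢδⱼ w_{ij}(eᵢ−eⱼ)(eᵢ−eⱼ)ᵀ, α ≥ 0, and δᵢ ∈ {0,1}. If the algebraic connectivity a_δ (the second smallest eigenvalue of the Laplacian of the surviving subgraph, with surviving vertices those i with δᵢ = 1) satisfies a_δ ≤ α, then a_δ = λ₂(L̄_δ), the second smallest eigenvalue of L̄_δ. -/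
open MeasureTheory ProbabilityTheory Matrix

noncomputable section

/-- Laplacian of the subgraph induced on the surviving vertices. -/
def subLap {n : ℕ} (w : Fin n → Fin n → ℝ) (δ : Fin n → Bool) :
    Matrix {i : Fin n // δ i = true} {i : Fin n // δ i = true} ℝ :=
  Matrix.of fun i j =>
    (if (i : Fin n) = (j : Fin n) then ∑ k : {i : Fin n // δ i = true}, w i k else 0) - w i j

/-!
Listing the surviving vertices first, the augmented Laplacian becomes block diagonal: the
Laplacian of the surviving subgraph, and `α • 1` on the ghost vertices (the Laplacian term
vanishes there, since every edge at a ghost vertex carries the factor `δᵢ = 0`). Hence its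
eigenvalues are those of the subgraph together with copies of `α`, and copies of `α` cannot
move the second smallest eigenvalue `a_δ ≤ α`.
-/

open Polynomial

theorem two_nsmul_sum_sum_ite_lt {ι β : Type*} [Fintype ι] [LinearOrder ι] [AddCommMonoid β]
    {f : ι → ι → β} (hf : ∀ i j, f i j = f j i) (hd : ∀ i, f i i = 0) :
    2 • ∑ i, ∑ j, (if i < j then f i j else 0) = ∑ i, ∑ j, f i j := by
  have hswap : ∑ i, ∑ j, (if i < j then f i j else 0) = ∑ i, ∑ j, (if j < i then f i j else 0) := by
    rw [Finset.sum_comm]; simp_rw [hf]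
  rw [two_nsmul]
  nth_rw 2 [hswap]
  simp_rw [← Finset.sum_add_distrib]
  refine Finset.sum_congr rfl fun i _ => Finset.sum_congr rfl fun j _ => ?_
  rcases lt_trichotomy i j with h | rfl | h
  · simp [h, h.not_gt]
  · simp [hd]
  · simp [h, h.not_gt]

theorem sum_sum_smul_vecMulVec_sub {n : ℕ} {A : Matrix (Fin n) (Fin n) ℝ} (hA : A.IsSymm) :
    ∑ i, ∑ j, A i j • vecMulVec (ev i - ev j) (ev i - ev j)
      = 2 • (diagonal (fun i => ∑ k, A i k) - A) := by
  ext p q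
  simp only [ev, Matrix.sum_apply, Matrix.smul_apply, vecMulVec_apply, Pi.sub_apply,
    Pi.single_apply, mul_sub, mul_ite, mul_one, mul_zero, smul_eq_mul, Finset.sum_sub_distrib,
    Finset.sum_ite_irrel, Finset.sum_const_zero, Finset.sum_ite_eq, Finset.mem_univ, ↓reduceIte,
    Matrix.sub_apply, diagonal_apply, nsmul_eq_mul, Nat.cast_ofNat]
  rw [hA.apply p q]
  split_ifs with h
  · subst h
    rw [Finset.sum_congr rfl fun x _ => hA.apply p x]
    ring
  · ring

theorem lapOf_eq_diagonal_sub {n : ℕ} (w : Fin n → Fin n → ℝ) (c : Fin n → ℝ)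
    (hsymm : ∀ i j, w i j = w j i) :
    lapOf w c = diagonal (fun i => ∑ k, c i * c k * w i k) - of fun i j => c i * c j * w i j := by
  have hA : (of fun i j => c i * c j * w i j).IsSymm := by
    ext i j; simp [hsymm i j, mul_comm]
  have := sum_sum_smul_vecMulVec_sub hA
  rw [← two_nsmul_sum_sum_ite_lt] at this
  · exact nsmul_right_injective (M := Fin n → Fin n → ℝ) two_ne_zero this
  · intro i j
    rw [of_apply, of_apply, hsymm i j, ← neg_sub (ev i), vecMulVec_neg, neg_vecMulVec, neg_neg,
      mul_comm (c i)]
  · simp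

theorem sum_ite_eq_sum_subtype {ι M : Type*} [Fintype ι] [AddCommMonoid M] (p : ι → Prop)
    [DecidablePred p] (f : ι → M) : ∑ k, (if p k then f k else 0) = ∑ k : Subtype p, f k := by
  rw [← Finset.sum_filter, Finset.sum_subtype (p := p) _ (by simp)]

theorem augLap_submatrix_sumCompl {n : ℕ} (w : Fin n → Fin n → ℝ) (hsymm : ∀ i j, w i j = w j i)
    (α : ℝ) (δ : Fin n → Bool) :
    (augLap w α (fun i => if δ i then 1 else 0)).submatrix
        (Equiv.sumCompl fun i => δ i = true) (Equiv.sumCompl fun i => δ i = true)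
      = fromBlocks (subLap w δ) 0 0 (α • 1) := by
  rw [augLap, lapOf_eq_diagonal_sub w _ hsymm]
  ext (⟨i, hi⟩ | ⟨i, hi⟩) (⟨j, hj⟩ | ⟨j, hj⟩)
  · simp [subLap, diagonal_apply, hi, hj, sum_ite_eq_sum_subtype]
  · have hij : i ≠ j := by rintro rfl; exact hj hi
    simp [hj, hij]
  · have hij : i ≠ j := by rintro rfl; exact hi hj
    simp [hi, hij]
  · simp [diagonal_apply, hi, one_apply]

theorem Matrix.IsHermitian.map_eigenvalues_of_submatrix_eq_fromBlocks {m p q : Type*}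
    [Fintype m] [DecidableEq m] [Fintype p] [DecidableEq p] [Fintype q] [DecidableEq q]
    {A : Matrix m m ℝ} {B : Matrix p p ℝ} (hA : A.IsHermitian) (hB : B.IsHermitian)
    (e : p ⊕ q ≃ m) (a : ℝ) (h : A.submatrix e e = Matrix.fromBlocks B 0 0 (a • 1)) :
    Finset.univ.val.map hA.eigenvalues
      = Finset.univ.val.map hB.eigenvalues + Multiset.replicate (Fintype.card q) a := by
  have hcharpoly : A.charpoly = B.charpoly * (X - C a) ^ Fintype.card q := by
    rw [← charpoly_reindex e.symm, reindex_apply, Equiv.symm_symm, h,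
      charpoly_fromBlocks_zero₁₂, smul_one_eq_diagonal, charpoly_diagonal]
    simp
  have hroots := congrArg Polynomial.roots hcharpoly
  rw [roots_mul ((charpoly_monic B).mul ((monic_X_sub_C a).pow _)).ne_zero, roots_pow,
    roots_X_sub_C, hA.roots_charpoly_eq_eigenvalues, hB.roots_charpoly_eq_eigenvalues] at hroots
  simpa [Multiset.nsmul_singleton] using hroots

theorem Multiset.getD_one_sort_add {α : Type*} [LinearOrder α] {S T : Multiset α} (d : α)
    (hS : 1 < S.card) (hT : ∀ z ∈ T, (S.sort (· ≤ ·)).getD 1 d ≤ z) :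
    ((S + T).sort (· ≤ ·)).getD 1 d = (S.sort (· ≤ ·)).getD 1 d := by
  obtain ⟨x, y, t, hxyt⟩ : ∃ x y t, S.sort (· ≤ ·) = x :: y :: t := by
    have hlen : 1 < (S.sort (· ≤ ·)).length := by simpa using hS
    rcases hl : S.sort (· ≤ ·) with _ | ⟨x, _ | ⟨y, t⟩⟩
    all_goals simp_all
  rw [hxyt] at hT ⊢
  suffices (S + T).sort (· ≤ ·) = x :: y :: ((t : Multiset α) + T).sort (· ≤ ·) by
    rw [this]; rfl
  change ∀ z ∈ T, y ≤ z at hT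
  obtain ⟨hxy, hyt⟩ := List.pairwise_cons_cons_iff_of_trans.mp (hxyt ▸ Multiset.pairwise_sort S _)
  have hy : ∀ z ∈ ((t : Multiset α) + T).sort (· ≤ ·), y ≤ z := by
    intro z hz
    rcases Multiset.mem_add.mp ((Multiset.mem_sort _).mp hz) with h | h
    exacts [(List.pairwise_cons.mp hyt).1 z h, hT z h]
  apply List.Perm.eq_of_pairwise' (Multiset.pairwise_sort _ _)
  · exact List.Pairwise.cons_cons_of_trans hxy
      (List.pairwise_cons.mpr ⟨hy, Multiset.pairwise_sort _ _⟩)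
  · rw [← Multiset.coe_eq_coe, Multiset.sort_eq, ← Multiset.sort_eq S (· ≤ ·), hxyt]
    simp only [← Multiset.cons_coe, Multiset.sort_eq, Multiset.cons_add]

theorem stmt4_general {n : ℕ} (w : Fin n → Fin n → ℝ)
    (hsymm : ∀ i j, w i j = w j i)
    (α : ℝ) (δ : Fin n → Bool)
    (hcard : 1 < Fintype.card {i : Fin n // δ i = true})
    (hsub : (subLap w δ).IsHermitian)
    (haug : (augLap w α (fun i => if δ i then 1 else 0)).IsHermitian)
    (hle : lambda2 hsub ≤ α) :
    lambda2 hsub = lambda2 haug := by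
  have heigs := haug.map_eigenvalues_of_submatrix_eq_fromBlocks hsub _ α
    (augLap_submatrix_sumCompl w hsymm α δ)
  rw [lambda2, lambda2, sortedEigs, sortedEigs, heigs, Multiset.getD_one_sort_add]
  · simpa using hcard
  · intro z hz
    rw [Multiset.eq_of_mem_replicate hz]
    exact hle

/-- If the algebraic connectivity of the surviving subgraph is at most `α`, it equals the
second smallest eigenvalue of the augmented Laplacian. -/
theorem stmt4 {n : ℕ} (w : Fin n → Fin n → ℝ)
    (hsymm : ∀ i j, w i j = w j i) (hnn : ∀ i j, 0 ≤ w i j) (hdiag : ∀ i, w i i = 0)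
    (α : ℝ) (hα : 0 ≤ α) (δ : Fin n → Bool)
    (hcard : 1 < Fintype.card {i : Fin n // δ i = true})
    (hsub : (subLap w δ).IsHermitian)
    (haug : (augLap w α (fun i => if δ i then 1 else 0)).IsHermitian)
    (hle : lambda2 hsub ≤ α) :
    lambda2 hsub = lambda2 haug :=
  stmt4_general w hsymm α δ hcard hsub haug hle
end
end

section
/- For p ∈ [1/2, 1), the Kearns–Saul parameter satisfies K(p) = (1/2)√((1−2p)/log((1−p)/p)) ≤ 1/(2√(log(1/(1−p)))). -/
open MeasureTheory ProbabilityTheory Matrix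

noncomputable section

/-! With `q = 1 - p ∈ (0, 1/2]`, comparing the radicands amounts to `2 q log q ≤ log (1 - q)`.
This holds because `log q ≤ log (1/2)` while, by concavity of `log` on `[1/2, 1]`, the chord bound
gives `log (1 - q) ≥ 2 q log (1/2)`. -/

open Real

lemma two_mul_mul_log_le_log_one_sub {q : ℝ} (hq0 : 0 < q) (hq : q ≤ 1 / 2) :
    2 * q * log q ≤ log (1 - q) := by
  have chord : (1 - 2 * q) • log 1 + (2 * q) • log (1 / 2) ≤
      log ((1 - 2 * q) • (1 : ℝ) + (2 * q) • (1 / 2 : ℝ)) :=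
    strictConcaveOn_log_Ioi.concaveOn.2 (by norm_num) (by norm_num) (by linarith) (by linarith)
      (by ring)
  simp only [smul_eq_mul, log_one, mul_zero, zero_add] at chord
  rw [show (1 - 2 * q) * 1 + 2 * q * (1 / 2) = 1 - q by ring] at chord
  calc 2 * q * log q ≤ 2 * q * log (1 / 2) := by gcongr
    _ ≤ log (1 - q) := chord

lemma sub_div_log_le_one_div_log_one_div_one_sub {p : ℝ} (hp : p ∈ Set.Ico (1 / 2 : ℝ) 1) :
    (1 - 2 * p) / log ((1 - p) / p) ≤ 1 / log (1 / (1 - p)) := by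
  obtain ⟨hp_half, hp_one⟩ := hp
  have hq0 : 0 < 1 - p := by linarith
  have hp0 : 0 < p := by linarith
  have hL : log (1 / (1 - p)) = -log (1 - p) := by rw [one_div, log_inv]
  have hL_pos : 0 < log (1 / (1 - p)) := log_pos (by rw [lt_div_iff₀ hq0]; linarith)
  have key := two_mul_mul_log_le_log_one_sub hq0 (by linarith)
  rw [sub_sub_cancel] at key
  -- flip both signs so that the denominator `log (p / (1 - p))` is nonnegative (zero at `p = 1/2`)
  rw [show (1 - 2 * p) / log ((1 - p) / p) = (2 * p - 1) / log (p / (1 - p)) by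
    rw [← inv_div p (1 - p), log_inv, div_neg, ← neg_div, neg_sub]]
  refine div_le_of_le_mul₀ (log_nonneg ?_) (by positivity) ?_
  · rw [le_div_iff₀ hq0]; linarith
  · rw [log_div hp0.ne' hq0.ne', hL, one_div, inv_mul_eq_div, le_div_iff₀ (by linarith)]
    linarith

/-- Bound on the Kearns–Saul parameter for `p ∈ [1/2, 1)`. -/
theorem stmt9 (p : ℝ) (hp : p ∈ Set.Ico (1/2 : ℝ) 1) :
    ksK p ≤ 1 / (2 * Real.sqrt (Real.log (1 / (1 - p)))) := by
  calc ksK p = 1 / 2 * √((1 - 2 * p) / log ((1 - p) / p)) := rfl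
    _ ≤ 1 / 2 * √(1 / log (1 / (1 - p))) := by
      gcongr ?_ * √?_
      exact sub_div_log_le_one_div_log_one_div_one_sub hp
    _ = 1 / (2 * √(log (1 / (1 - p)))) := by
      rw [one_div (log _), sqrt_inv]
      field_simp
end
end

section
/- Let D_ξ, D_p be the diagonal matrices with diagonals ξᵢ = δᵢ − pᵢ and pᵢ respectively, where δᵢ ∈ {0,1}, and let A be a symmetric n×n matrix with nonnegative entries. Then ‖D_ξ A D_ξ‖² ≤ ‖D_q^{1/2} A D_q A D_q^{1/2}‖ + ‖D_q^{1/2} A D_{ξ∘(1−2p)} A D_q^{1/2}‖ + ‖A D_{ξ∘(1−2p)} A‖, where q = p∘(1−p) (entrywise) and ξ∘(1−2p) denotes the vector with entries ξᵢ(1−2pᵢ). -/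
/-!
With `D = D_ξ`, the matrix `M = D A D` is self-adjoint, so `‖M‖² = ‖M²‖ = ‖D A D² A D‖`.
Since each `δᵢ` is idempotent, `D² = D_q + D_r` with `r = ξ ∘ (1 - 2p)`, which splits `M²` into
`D A D_q A D + D A D_r A D`. The first term is `X⋆X` for `X = D_q^{1/2} A D`, whose norm equals that
of `X X⋆ = D_q^{1/2} A D² A D_q^{1/2}`; expanding `D²` once more gives the first two terms of the
bound. The second term is at most `‖A D_r A‖` because `‖D‖ ≤ 1`.
-/

open MeasureTheory ProbabilityTheory Matrix

noncomputable section

open scoped Matrix.Norms.L2Operator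

lemma IsIdempotentElem.sub_mul_self_eq {R : Type*} [CommRing R] {δ : R}
    (hδ : IsIdempotentElem δ) (p : R) :
    (δ - p) * (δ - p) = p * (1 - p) + (δ - p) * (1 - 2 * p) := by
  linear_combination hδ.eq

lemma norm_mul_mul_le_of_norm_le_one {E : Type*} [SeminormedRing E] {d : E} (hd : ‖d‖ ≤ 1)
    (x : E) : ‖d * x * d‖ ≤ ‖x‖ :=
  calc ‖d * x * d‖ ≤ ‖d‖ * ‖x‖ * ‖d‖ := norm_mul₃_le
    _ ≤ 1 * ‖x‖ * 1 := by gcongr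
    _ = ‖x‖ := by ring

section CStarRing

variable {E : Type*} [NormedRing E] [StarRing E] [CStarRing E]

lemma CStarRing.norm_star_mul_self_eq_norm_self_mul_star (x : E) :
    ‖star x * x‖ = ‖x * star x‖ := by
  rw [CStarRing.norm_star_mul_self, CStarRing.norm_self_mul_star]

lemma CStarRing.sq_norm_mul_mul_le {a d q r s : E} (ha : IsSelfAdjoint a) (hd : IsSelfAdjoint d)
    (hs : IsSelfAdjoint s) (hd_norm : ‖d‖ ≤ 1) (hdd : d * d = q + r) (hss : s * s = q) :
    ‖d * a * d‖ ^ 2 ≤ ‖s * a * q * a * s‖ + ‖s * a * r * a * s‖ + ‖a * r * a‖ := by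
  have hX : d * a * q * a * d = star (s * a * d) * (s * a * d) := by
    simp only [star_mul, ha.star_eq, hd.star_eq, hs.star_eq, ← hss]
    noncomm_ring
  have hX' : s * a * (q + r) * a * s = (s * a * d) * star (s * a * d) := by
    simp only [star_mul, ha.star_eq, hd.star_eq, hs.star_eq, ← hdd]
    noncomm_ring
  calc ‖d * a * d‖ ^ 2 = ‖d * a * (d * d) * a * d‖ := by
        rw [← (ha.conjugate_self hd).norm_mul_self]
        noncomm_ring
    _ = ‖d * a * q * a * d + d * (a * r * a) * d‖ := by rw [hdd]; noncomm_ring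
    _ ≤ ‖d * a * q * a * d‖ + ‖d * (a * r * a) * d‖ := norm_add_le _ _
    _ ≤ ‖s * a * (q + r) * a * s‖ + ‖a * r * a‖ := by
        rw [hX, hX', CStarRing.norm_star_mul_self_eq_norm_self_mul_star]
        gcongr
        exact norm_mul_mul_le_of_norm_le_one hd_norm _
    _ ≤ ‖s * a * q * a * s‖ + ‖s * a * r * a * s‖ + ‖a * r * a‖ := by
        gcongr
        simpa only [mul_add, add_mul] using norm_add_le _ _

end CStarRing

theorem stmt12_general {n : ℕ} (A : Matrix (Fin n) (Fin n) ℝ) (hA : A.IsHermitian)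
    (p : Fin n → ℝ) (hp : ∀ i, p i ∈ Set.Icc (0:ℝ) 1)
    (δ : Fin n → ℝ) (h01 : ∀ i, δ i = 0 ∨ δ i = 1) :
    opNorm (Matrix.diagonal (fun i => δ i - p i) * A *
        Matrix.diagonal (fun i => δ i - p i)) ^ 2 ≤
      opNorm (Matrix.diagonal (fun i => Real.sqrt (p i * (1 - p i))) * A *
          Matrix.diagonal (fun i => p i * (1 - p i)) * A *
          Matrix.diagonal (fun i => Real.sqrt (p i * (1 - p i))))
      + opNorm (Matrix.diagonal (fun i => Real.sqrt (p i * (1 - p i))) * A *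
          Matrix.diagonal (fun i => (δ i - p i) * (1 - 2 * p i)) * A *
          Matrix.diagonal (fun i => Real.sqrt (p i * (1 - p i))))
      + opNorm (A * Matrix.diagonal (fun i => (δ i - p i) * (1 - 2 * p i)) * A) := by
  have hξ_le : ‖diagonal fun i => δ i - p i‖ ≤ 1 := by
    rw [l2_opNorm_diagonal]
    refine pi_norm_le_iff_of_nonneg zero_le_one |>.mpr fun i => ?_
    rw [Real.norm_eq_abs, abs_le]
    obtain ⟨hp0, hp1⟩ := hp i
    rcases h01 i with h | h <;> constructor <;> linarith
  refine CStarRing.sq_norm_mul_mul_le hA (isHermitian_diagonal _) (isHermitian_diagonal _) hξ_le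
    ?_ ?_
  · rw [diagonal_mul_diagonal, diagonal_add]
    congr 1 with i
    refine IsIdempotentElem.sub_mul_self_eq ?_ _
    rcases h01 i with h | h <;> simp [IsIdempotentElem, h]
  · rw [diagonal_mul_diagonal]
    congr 1 with i
    obtain ⟨hp0, hp1⟩ := hp i
    exact Real.mul_self_sqrt (mul_nonneg hp0 (sub_nonneg.mpr hp1))

/-- Deterministic matrix-norm bound for `‖D_ξ A D_ξ‖²`. -/
theorem stmt12 {n : ℕ} (A : Matrix (Fin n) (Fin n) ℝ) (hA : A.IsHermitian)
    (hnn : ∀ i j, 0 ≤ A i j)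
    (p : Fin n → ℝ) (hp : ∀ i, p i ∈ Set.Icc (0:ℝ) 1)
    (δ : Fin n → ℝ) (h01 : ∀ i, δ i = 0 ∨ δ i = 1) :
    opNorm (Matrix.diagonal (fun i => δ i - p i) * A *
        Matrix.diagonal (fun i => δ i - p i)) ^ 2 ≤
      opNorm (Matrix.diagonal (fun i => Real.sqrt (p i * (1 - p i))) * A *
          Matrix.diagonal (fun i => p i * (1 - p i)) * A *
          Matrix.diagonal (fun i => Real.sqrt (p i * (1 - p i))))
      + opNorm (Matrix.diagonal (fun i => Real.sqrt (p i * (1 - p i))) * A *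
          Matrix.diagonal (fun i => (δ i - p i) * (1 - 2 * p i)) * A *
          Matrix.diagonal (fun i => Real.sqrt (p i * (1 - p i))))
      + opNorm (A * Matrix.diagonal (fun i => (δ i - p i) * (1 - 2 * p i)) * A) :=
  stmt12_general A hA p hp δ h01
end
end

section
/- Let D_p and D_ξ be diagonal matrices with entries pᵢ ∈ [0,1] and ξᵢ = δᵢ − pᵢ (δᵢ ∈ {0,1}) and A a symmetric matrix. Then ‖D_p A D_ξ‖² ≤ ‖D_p A D_{p∘(1−p)}^{1/2}‖² + ‖A D_{ξ∘(1−2p)} A‖, where p∘(1−p) and ξ∘(1−2p) are entrywise products. -/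
open MeasureTheory ProbabilityTheory Matrix

noncomputable section

/-! Write `ξ = δ - p`. Since `δᵢ ∈ {0, 1}`, `ξᵢ² = pᵢ(1 - pᵢ) + ξᵢ(1 - 2pᵢ)`, so for symmetric `A`
`(D_p A D_ξ)(D_p A D_ξ)ᵀ = (D_p A D_s)(D_p A D_s)ᵀ + D_p (A D_{ξ(1-2p)} A) D_p` with `s = √(p(1-p))`.
The C⋆-identity `‖x‖² = ‖x xᵀ‖`, the triangle inequality and `‖D_p‖ ≤ 1` give the bound. -/

open scoped Matrix.Norms.L2Operator

theorem opNorm_eq_norm {n : ℕ} (A : Matrix (Fin n) (Fin n) ℝ) : opNorm A = ‖A‖ := rfl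

theorem sq_norm_le_of_mul_star_eq_add {R : Type*} [NonUnitalNormedRing R] [StarRing R]
    [CStarRing R] {x y d m : R} (h : x * star x = y * star y + d * m * star d) (hd : ‖d‖ ≤ 1) :
    ‖x‖ ^ 2 ≤ ‖y‖ ^ 2 + ‖m‖ := by
  have hd' : ‖star d‖ ≤ 1 := by rwa [norm_star]
  calc ‖x‖ ^ 2 = ‖x * star x‖ := by rw [CStarRing.norm_self_mul_star, sq]
    _ ≤ ‖y * star y‖ + ‖d * m * star d‖ := h ▸ norm_add_le _ _
    _ ≤ ‖y‖ ^ 2 + ‖d‖ * ‖m‖ * ‖star d‖ := by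
      rw [CStarRing.norm_self_mul_star, ← sq]
      gcongr
      exact norm_mul₃_le
    _ ≤ ‖y‖ ^ 2 + 1 * ‖m‖ * 1 := by gcongr
    _ = ‖y‖ ^ 2 + ‖m‖ := by ring

theorem mul_mul_star_eq_add {R : Type*} [Ring R] [StarRing R] {a e s c : R}
    (ha : star a = a) (he : e * star e = s * star s + c) (d : R) :
    (d * a * e) * star (d * a * e) = (d * a * s) * star (d * a * s) + d * (a * c * a) * star d := by
  simp only [star_mul, ha]
  calc d * a * e * (star e * (a * star d)) = d * a * (e * star e) * a * star d := by noncomm_ring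
    _ = _ := by rw [he]; noncomm_ring

theorem sub_sq_eq_mul_one_sub_add {δ p : ℝ} (hδ : δ = 0 ∨ δ = 1) :
    (δ - p) ^ 2 = p * (1 - p) + (δ - p) * (1 - 2 * p) := by
  rcases hδ with rfl | rfl <;> ring

theorem norm_diagonal_le_one {n : Type*} [Fintype n] [DecidableEq n] {v : n → ℝ}
    (hv : ∀ i, v i ∈ Set.Icc (-1 : ℝ) 1) : ‖(diagonal v : Matrix n n ℝ)‖ ≤ 1 := by
  rw [l2_opNorm_diagonal, pi_norm_le_iff_of_nonneg zero_le_one]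
  exact fun i => abs_le.mpr (hv i)

theorem diagonal_mul_star_eq_add {n : Type*} [Fintype n] [DecidableEq n] {p δ : n → ℝ}
    (hp : ∀ i, p i ∈ Set.Icc (0 : ℝ) 1) (hδ : ∀ i, δ i = 0 ∨ δ i = 1) :
    diagonal (fun i => δ i - p i) * star (diagonal (fun i => δ i - p i)) =
      diagonal (fun i => √(p i * (1 - p i))) * star (diagonal (fun i => √(p i * (1 - p i)))) +
        diagonal (fun i => (δ i - p i) * (1 - 2 * p i)) := by
  simp only [star_eq_conjTranspose, diagonal_conjTranspose, star_trivial, diagonal_mul_diagonal,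
    diagonal_add]
  congr 1
  funext i
  rw [Real.mul_self_sqrt (mul_nonneg (hp i).1 (sub_nonneg.2 (hp i).2)), ← sq,
    sub_sq_eq_mul_one_sub_add (hδ i)]

/-- Deterministic matrix-norm bound for `‖D_p A D_ξ‖²`. -/
theorem stmt13 {n : ℕ} (A : Matrix (Fin n) (Fin n) ℝ) (hA : A.IsHermitian)
    (p : Fin n → ℝ) (hp : ∀ i, p i ∈ Set.Icc (0:ℝ) 1)
    (δ : Fin n → ℝ) (h01 : ∀ i, δ i = 0 ∨ δ i = 1) :
    opNorm (Matrix.diagonal p * A * Matrix.diagonal (fun i => δ i - p i)) ^ 2 ≤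
      opNorm (Matrix.diagonal p * A *
          Matrix.diagonal (fun i => Real.sqrt (p i * (1 - p i)))) ^ 2
      + opNorm (A * Matrix.diagonal (fun i => (δ i - p i) * (1 - 2 * p i)) * A) := by
  have hp_norm : ‖(diagonal p : Matrix (Fin n) (Fin n) ℝ)‖ ≤ 1 :=
    norm_diagonal_le_one fun i => ⟨by linarith [(hp i).1], (hp i).2⟩
  simp only [opNorm_eq_norm]
  exact sq_norm_le_of_mul_star_eq_add
    (mul_mul_star_eq_add hA (diagonal_mul_star_eq_add hp h01) _) hp_norm
end
end
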